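/- Let G be a connected graph. Then tmc(G) ≤ mc(G) + mvc(G), and equality holds if and only if G is a complete graph. -/

import Mathlib

open SimpleGraph

/-- A walk is a *total monochromatic path* (w.r.t. a vertex coloring `vcol` and an
edge coloring `ecol`) if it is a path and all its edges and internal vertices
share one common color. -/
def IsTMCPath {V : Type*} (G : SimpleGraph V) (vcol : V → ℕ) (ecol : Sym2 V → ℕ)
    {u v : V} (p : G.Walk u v) : Prop :=
  p.IsPath ∧ ∃ c : ℕ, (∀ e ∈ p.edges, ecol e = c) ∧
    ∀ w ∈ p.support, w ≠ u → w ≠ v → vcol w = c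

/-- A total coloring (vertex coloring `vcol` together with edge coloring `ecol`) is a
*TMC-coloring* if any two vertices are connected by a total monochromatic path. -/
def IsTMCColoring {V : Type*} (G : SimpleGraph V) (vcol : V → ℕ) (ecol : Sym2 V → ℕ) : Prop :=
  ∀ u v : V, ∃ p : G.Walk u v, IsTMCPath G vcol ecol p

/-- The number of colors used by a total coloring: colors on vertices together with
colors on (actual) edges of `G`. -/
noncomputable def totalColorsUsed {V : Type*} (G : SimpleGraph V)
    (vcol : V → ℕ) (ecol : Sym2 V → ℕ) : ℕ :=
  (Set.range vcol ∪ ecol '' G.edgeSet).ncard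

/-- The total monochromatic connection number `tmc G`: the maximum number of colors
used in a TMC-coloring of `G`. -/
noncomputable def tmc {V : Type*} (G : SimpleGraph V) : ℕ :=
  sSup { k | ∃ vcol ecol, IsTMCColoring G vcol ecol ∧ totalColorsUsed G vcol ecol = k }

/-- An edge coloring is an *MC-coloring* if any two vertices are connected by a
monochromatic path (all edges of one color). -/
def IsMCColoring {V : Type*} (G : SimpleGraph V) (ecol : Sym2 V → ℕ) : Prop :=
  ∀ u v : V, ∃ p : G.Walk u v, p.IsPath ∧ ∃ c : ℕ, ∀ e ∈ p.edges, ecol e = c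

/-- The monochromatic connection number `mc G`. -/
noncomputable def mc {V : Type*} (G : SimpleGraph V) : ℕ :=
  sSup { k | ∃ ecol : Sym2 V → ℕ, IsMCColoring G ecol ∧ (ecol '' G.edgeSet).ncard = k }

/-- A vertex coloring is an *MVC-coloring* if any two vertices are connected by a
vertex-monochromatic path (all internal vertices of one color). -/
def IsMVCColoring {V : Type*} (G : SimpleGraph V) (vcol : V → ℕ) : Prop :=
  ∀ u v : V, ∃ p : G.Walk u v, p.IsPath ∧ ∃ c : ℕ,
    ∀ w ∈ p.support, w ≠ u → w ≠ v → vcol w = c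

/-- The monochromatic vertex connection number `mvc G`. -/
noncomputable def mvc {V : Type*} (G : SimpleGraph V) : ℕ :=
  sSup { k | ∃ vcol : V → ℕ, IsMVCColoring G vcol ∧ (Set.range vcol).ncard = k }

/-- The number of leaves (vertices of degree one) of a graph. -/
noncomputable def leafCount {V : Type*} (G : SimpleGraph V) : ℕ :=
  {v : V | (G.neighborSet v).ncard = 1}.ncard

/-- `maxLeaves G = l(G)`: the maximum number of leaves over all spanning trees of `G`. -/
noncomputable def maxLeaves {V : Type*} (G : SimpleGraph V) : ℕ :=
  sSup { k | ∃ T : SimpleGraph V, T ≤ G ∧ T.IsTree ∧ leafCount T = k }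

/-!
A TMC-coloring is at once an MC-coloring (forget the vertex colors) and an MVC-coloring (forget
the edge colors), so it uses at most `mc G + mvc G` colors, and fewer as soon as some color
appears both on a vertex and on an edge. If `u, v` are distinct and non-adjacent, the total
monochromatic `u`-`v` path has an internal vertex, which carries the color of the path's first
edge; hence equality forces `G` to be complete. Conversely, in a complete graph every pair is
joined by a single edge, so every total coloring is a TMC-coloring, and coloring vertices and
edges injectively with disjoint palettes gives `tmc G ≥ |V| + |E| ≥ mvc G + mc G`.
-/

theorem Set.ncard_range_le_card {α β : Type*} [Finite α] (f : α → β) :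
    (Set.range f).ncard ≤ Nat.card α := by
  rw [← Set.image_univ, ← Set.ncard_univ]
  exact Set.ncard_image_le

section Colorings

variable {V : Type*} {G : SimpleGraph V} {vcol : V → ℕ} {ecol : Sym2 V → ℕ}

theorem IsTMCColoring.isMCColoring (h : IsTMCColoring G vcol ecol) : IsMCColoring G ecol :=
  fun u v ↦ (h u v).imp fun _ ⟨hp, c, he, _⟩ ↦ ⟨hp, c, he⟩

theorem IsTMCColoring.isMVCColoring (h : IsTMCColoring G vcol ecol) : IsMVCColoring G vcol :=
  fun u v ↦ (h u v).imp fun _ ⟨hp, c, _, hv⟩ ↦ ⟨hp, c, hv⟩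

theorem isTMCColoring_const (hG : G.Connected) (c : ℕ) :
    IsTMCColoring G (fun _ ↦ c) (fun _ ↦ c) := by
  classical
  intro u v
  obtain ⟨p⟩ := hG.preconnected u v
  exact ⟨p.toPath, p.toPath.2, c, fun _ _ ↦ rfl, fun _ _ _ _ ↦ rfl⟩

theorem isTMCColoring_top (vcol : V → ℕ) (ecol : Sym2 V → ℕ) :
    IsTMCColoring (⊤ : SimpleGraph V) vcol ecol := by
  intro u v
  rcases eq_or_ne u v with rfl | huv
  · exact ⟨.nil, .nil, 0, by simp, fun w hw hwu _ ↦ absurd (by simpa using hw) hwu⟩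
  · have hadj : (⊤ : SimpleGraph V).Adj u v := huv
    refine ⟨hadj.toWalk, .of_adj hadj, ecol s(u, v), by simp, fun w hw hwu hwv ↦ ?_⟩
    simp only [Adj.toWalk, Walk.support_cons, Walk.support_nil, List.mem_cons,
      List.not_mem_nil, or_false] at hw
    tauto

theorem IsTMCColoring.inter_nonempty_of_not_adj (h : IsTMCColoring G vcol ecol) {u v : V}
    (huv : u ≠ v) (hnadj : ¬ G.Adj u v) : (Set.range vcol ∩ ecol '' G.edgeSet).Nonempty := by
  obtain ⟨p, -, c, hedges, hinner⟩ := h u v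
  cases p with
  | nil => exact absurd rfl huv
  | @cons _ w _ hadj q =>
    have hwv : w ≠ v := by
      rintro rfl
      exact hnadj hadj
    have hfirst : s(u, w) ∈ (Walk.cons hadj q).edges := by simp
    exact ⟨c, ⟨w, hinner w (by simp) hadj.ne' hwv⟩, s(u, w), hadj, hedges _ hfirst⟩

theorem totalColorsUsed_le_add :
    totalColorsUsed G vcol ecol ≤ (Set.range vcol).ncard + (ecol '' G.edgeSet).ncard :=
  Set.ncard_union_le _ _

variable [Finite V]

theorem totalColorsUsed_lt_add (h : (Set.range vcol ∩ ecol '' G.edgeSet).Nonempty) :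
    totalColorsUsed G vcol ecol < (Set.range vcol).ncard + (ecol '' G.edgeSet).ncard := by
  have hsum := Set.ncard_union_add_ncard_inter (Set.range vcol) (ecol '' G.edgeSet)
  have hpos := (Set.ncard_pos (Set.toFinite _)).2 h
  unfold totalColorsUsed
  omega

theorem exists_totalColorsUsed_eq_card_add (G : SimpleGraph V) :
    ∃ vcol ecol, totalColorsUsed G vcol ecol = Nat.card V + G.edgeSet.ncard := by
  obtain ⟨f, hf⟩ := exists_injective_nat V
  obtain ⟨g, hg⟩ := exists_injective_nat (Sym2 V)
  refine ⟨fun v ↦ 2 * f v, fun e ↦ 2 * g e + 1, ?_⟩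
  have hdisj : Disjoint (Set.range fun v ↦ 2 * f v) ((fun e ↦ 2 * g e + 1) '' G.edgeSet) := by
    rw [Set.disjoint_left]
    rintro _ ⟨v, rfl⟩ ⟨e, -, he⟩
    simp only at he
    omega
  rw [totalColorsUsed, Set.ncard_union_eq hdisj,
    Set.ncard_range_of_injective fun _ _ h ↦ hf (by omega),
    Set.ncard_image_of_injective _ fun _ _ h ↦ hg (by omega)]

theorem bddAbove_tmc (G : SimpleGraph V) :
    BddAbove
      {k | ∃ vcol ecol, IsTMCColoring G vcol ecol ∧ totalColorsUsed G vcol ecol = k} := by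
  refine ⟨Nat.card V + G.edgeSet.ncard, ?_⟩
  rintro _ ⟨vcol, ecol, -, rfl⟩
  exact totalColorsUsed_le_add.trans
    (add_le_add (Set.ncard_range_le_card vcol) Set.ncard_image_le)

theorem IsTMCColoring.totalColorsUsed_le_tmc (h : IsTMCColoring G vcol ecol) :
    totalColorsUsed G vcol ecol ≤ tmc G :=
  le_csSup (bddAbove_tmc G) ⟨vcol, ecol, h, rfl⟩

theorem IsMCColoring.ncard_image_le_mc (h : IsMCColoring G ecol) :
    (ecol '' G.edgeSet).ncard ≤ mc G :=
  le_csSup ⟨G.edgeSet.ncard, fun _ ⟨_, _, hk⟩ ↦ hk ▸ Set.ncard_image_le⟩ ⟨ecol, h, rfl⟩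

theorem IsMVCColoring.ncard_range_le_mvc (h : IsMVCColoring G vcol) :
    (Set.range vcol).ncard ≤ mvc G :=
  le_csSup ⟨Nat.card V, fun _ ⟨_, _, hk⟩ ↦ hk ▸ Set.ncard_range_le_card _⟩ ⟨vcol, h, rfl⟩

theorem mc_le_ncard_edgeSet (G : SimpleGraph V) : mc G ≤ G.edgeSet.ncard :=
  csSup_le' fun _ ⟨_, _, hk⟩ ↦ hk ▸ Set.ncard_image_le

theorem mvc_le_card (G : SimpleGraph V) : mvc G ≤ Nat.card V :=
  csSup_le' fun _ ⟨_, _, hk⟩ ↦ hk ▸ Set.ncard_range_le_card _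

theorem exists_isTMCColoring_totalColorsUsed_eq_tmc (hG : G.Connected) :
    ∃ vcol ecol, IsTMCColoring G vcol ecol ∧ totalColorsUsed G vcol ecol = tmc G := by
  refine Nat.sSup_mem ?_ (bddAbove_tmc G)
  exact ⟨_, _, _, isTMCColoring_const hG 0, rfl⟩

theorem IsTMCColoring.totalColorsUsed_le_mc_add_mvc (h : IsTMCColoring G vcol ecol) :
    totalColorsUsed G vcol ecol ≤ mc G + mvc G :=
  calc totalColorsUsed G vcol ecol
      ≤ (Set.range vcol).ncard + (ecol '' G.edgeSet).ncard := totalColorsUsed_le_add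
    _ ≤ mvc G + mc G :=
        add_le_add h.isMVCColoring.ncard_range_le_mvc h.isMCColoring.ncard_image_le_mc
    _ = mc G + mvc G := add_comm _ _

theorem IsTMCColoring.eq_top_of_totalColorsUsed_eq (h : IsTMCColoring G vcol ecol)
    (heq : totalColorsUsed G vcol ecol = mc G + mvc G) : G = ⊤ := by
  by_contra hne
  obtain ⟨u, v, huv, hnadj⟩ := ne_top_iff_exists_not_adj.1 hne
  have hlt := totalColorsUsed_lt_add (h.inter_nonempty_of_not_adj huv hnadj)
  have hmc := h.isMCColoring.ncard_image_le_mc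
  have hmvc := h.isMVCColoring.ncard_range_le_mvc
  omega

theorem mc_add_mvc_le_tmc_top :
    mc (⊤ : SimpleGraph V) + mvc (⊤ : SimpleGraph V) ≤ tmc (⊤ : SimpleGraph V) := by
  obtain ⟨vcol, ecol, hcard⟩ := exists_totalColorsUsed_eq_card_add (⊤ : SimpleGraph V)
  calc mc (⊤ : SimpleGraph V) + mvc ⊤ ≤ (⊤ : SimpleGraph V).edgeSet.ncard + Nat.card V :=
        add_le_add (mc_le_ncard_edgeSet ⊤) (mvc_le_card ⊤)
    _ = totalColorsUsed ⊤ vcol ecol := by rw [hcard, add_comm]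
    _ ≤ tmc ⊤ := (isTMCColoring_top vcol ecol).totalColorsUsed_le_tmc

end Colorings

/-- For a connected graph `G`, `tmc(G) ≤ mc(G) + mvc(G)`, with equality if and only
if `G` is a complete graph. -/
theorem stmt_17 {V : Type*} [Fintype V] (G : SimpleGraph V) (hG : G.Connected) :
    tmc G ≤ mc G + mvc G ∧ (tmc G = mc G + mvc G ↔ G = ⊤) := by
  obtain ⟨vcol, ecol, hcol, hcard⟩ := exists_isTMCColoring_totalColorsUsed_eq_tmc hG
  have hle : tmc G ≤ mc G + mvc G := hcard ▸ hcol.totalColorsUsed_le_mc_add_mvc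
  refine ⟨hle, fun heq ↦ hcol.eq_top_of_totalColorsUsed_eq (hcard.trans heq), ?_⟩
  rintro rfl
  exact hle.antisymm mc_add_mvc_le_tmc_top
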